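/- (Factorisation theorem, multiplicative part.) The bijection ξ transports the double cross product multiplication to the multiplication of X: for all u, v ∈ A ⊗ H, ξ(m_D(u ⊗ v)) = ξ(u)·ξ(v) in X, and ξ(1_A ⊗ 1_H) = 1_X. Hence ξ is an algebra isomorphism from the double cross product A ⋈ H onto X. -/

import Mathlib

open TensorProduct

noncomputable section

universe u

variable {k A H X : Type u} [Field k]
  [Ring A] [Ring H] [Ring X]
  [Bialgebra k A] [Bialgebra k H] [Bialgebra k X]

/-- ζ : H ⊗ A → A ⊗ H, ζ(h ⊗ a) = ξ⁻¹(j_H(h) · j_A(a)). -/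
def zetaF (jA : A →ₐc[k] X) (jH : H →ₐc[k] X) (ξ : (A ⊗[k] H) ≃ₗ[k] X) :
    H ⊗[k] A →ₗ[k] A ⊗[k] H :=
  ξ.symm.toLinearMap ∘ₗ LinearMap.mul' k X ∘ₗ
    TensorProduct.map (jH : H →ₗ[k] X) (jA : A →ₗ[k] X)

/-- α := (id_A ⊗ ε_H) ∘ ζ. -/
def alphaF (jA : A →ₐc[k] X) (jH : H →ₐc[k] X) (ξ : (A ⊗[k] H) ≃ₗ[k] X) :
    H ⊗[k] A →ₗ[k] A :=
  (TensorProduct.rid k A).toLinearMap ∘ₗ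
    TensorProduct.map LinearMap.id Coalgebra.counit ∘ₗ zetaF jA jH ξ

/-- β := (ε_A ⊗ id_H) ∘ ζ. -/
def betaF (jA : A →ₐc[k] X) (jH : H →ₐc[k] X) (ξ : (A ⊗[k] H) ≃ₗ[k] X) :
    H ⊗[k] A →ₗ[k] H :=
  (TensorProduct.lid k H).toLinearMap ∘ₗ
    TensorProduct.map Coalgebra.counit LinearMap.id ∘ₗ zetaF jA jH ξ

/-- The map H ⊗ A → A ⊗ H, h ⊗ a ↦ Σ α(h₁ ⊗ a₁) ⊗ β(h₂ ⊗ a₂). -/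
def zetaAB (jA : A →ₐc[k] X) (jH : H →ₐc[k] X) (ξ : (A ⊗[k] H) ≃ₗ[k] X) :
    H ⊗[k] A →ₗ[k] A ⊗[k] H :=
  TensorProduct.map (alphaF jA jH ξ) (betaF jA jH ξ) ∘ₗ
    (Coalgebra.comul : H ⊗[k] A →ₗ[k] (H ⊗[k] A) ⊗[k] (H ⊗[k] A))

/-- The double cross product multiplication m_D on A ⊗ H:
m_D((a ⊗ h) ⊗ (a' ⊗ h')) = Σ a·α(h₁ ⊗ a'₁) ⊗ β(h₂ ⊗ a'₂)·h'. -/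
def mD (jA : A →ₐc[k] X) (jH : H →ₐc[k] X) (ξ : (A ⊗[k] H) ≃ₗ[k] X) :
    (A ⊗[k] H) ⊗[k] (A ⊗[k] H) →ₗ[k] A ⊗[k] H :=
  TensorProduct.map (LinearMap.mul' k A) LinearMap.id ∘ₗ
  (TensorProduct.assoc k A A H).symm.toLinearMap ∘ₗ
  TensorProduct.map LinearMap.id
    (TensorProduct.map LinearMap.id (LinearMap.mul' k H) ∘ₗ
     (TensorProduct.assoc k A H H).toLinearMap ∘ₗ
     TensorProduct.map (zetaAB jA jH ξ) LinearMap.id ∘ₗ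
     (TensorProduct.assoc k H A H).symm.toLinearMap) ∘ₗ
  (TensorProduct.assoc k A H (A ⊗[k] H)).toLinearMap

/-!
The map `ζ = ξ⁻¹ ∘ μ_X ∘ (j_H ⊗ j_A)` is a morphism of coalgebras: `μ_X` and tensor products
of coalgebra maps are coalgebra maps, and `ξ = μ_X ∘ (j_A ⊗ j_H)` is therefore a coalgebra
isomorphism. For any coalgebra map `f` into `A ⊗ H`, the Sweedler recombination
`Σ (id ⊗ ε)(f x₁) ⊗ (ε ⊗ id)(f x₂)` is `(id ⊗ ε ⊗ ε ⊗ id)(Δ (f x)) = f x` by counitality, so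
`Σ α(h₁ ⊗ a₁) ⊗ β(h₂ ⊗ a₂) = ζ(h ⊗ a)`. Then
`ξ(m_D((a ⊗ h) ⊗ (a' ⊗ h'))) = j_A(a) · ξ(ζ(h ⊗ a')) · j_H(h') = j_A(a) j_H(h) j_A(a') j_H(h')`.
-/

namespace TensorProduct

variable (R M N : Type*) [CommSemiring R]
  [AddCommMonoid M] [Module R M] [Coalgebra R M]
  [AddCommMonoid N] [Module R N] [Coalgebra R N]

def counitRight : M ⊗[R] N →ₗ[R] M :=
  (TensorProduct.rid R M).toLinearMap ∘ₗ map LinearMap.id Coalgebra.counit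

def counitLeft : M ⊗[R] N →ₗ[R] N :=
  (TensorProduct.lid R N).toLinearMap ∘ₗ map Coalgebra.counit LinearMap.id

theorem map_counitRight_counitLeft_comp_comul :
    map (counitRight R M N) (counitLeft R M N) ∘ₗ Coalgebra.comul = LinearMap.id := by
  have hcomm : map (counitRight R M N) (counitLeft R M N) ∘ₗ
      (tensorTensorTensorComm R M M N N).toLinearMap =
      map ((TensorProduct.rid R M).toLinearMap ∘ₗ LinearMap.lTensor M Coalgebra.counit)
        ((TensorProduct.lid R N).toLinearMap ∘ₗ LinearMap.rTensor N Coalgebra.counit) := by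
    ext m₁ m₂ n₁ n₂
    simp [counitRight, counitLeft, smul_tmul', smul_comm (Coalgebra.counit (R := R) m₂)]
  rw [comul_def, AlgebraTensorModule.tensorTensorTensorComm_eq, AlgebraTensorModule.map_eq,
    ← LinearMap.comp_assoc, hcomm, ← map_comp, LinearMap.comp_assoc, LinearMap.comp_assoc,
    Coalgebra.lTensor_counit_comp_comul, Coalgebra.rTensor_counit_comp_comul]
  ext; simp

end TensorProduct

namespace CoalgHom

variable {R M N C : Type*} [CommSemiring R]
  [AddCommMonoid M] [Module R M] [Coalgebra R M]
  [AddCommMonoid N] [Module R N] [Coalgebra R N]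
  [AddCommMonoid C] [Module R C] [Coalgebra R C]

theorem map_counitRight_comp_counitLeft_comp_comul (f : C →ₗc[R] M ⊗[R] N) :
    map (counitRight R M N ∘ₗ f) (counitLeft R M N ∘ₗ f) ∘ₗ Coalgebra.comul =
      (f : C →ₗ[R] M ⊗[R] N) := by
  rw [map_comp, LinearMap.comp_assoc, CoalgHomClass.map_comp_comul, ← LinearMap.comp_assoc,
    map_counitRight_counitLeft_comp_comul, LinearMap.id_comp]

end CoalgHom

def CoalgEquiv.ofLinearEquiv {R M N : Type*} [CommSemiring R]
    [AddCommMonoid M] [Module R M] [Coalgebra R M] [AddCommMonoid N] [Module R N] [Coalgebra R N]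
    (e : M ≃ₗ[R] N) (f : M →ₗc[R] N) (h : e.toLinearMap = f) : M ≃ₗc[R] N :=
  { e with
    counit_comp := h ▸ f.counit_comp
    map_comp_comul := h ▸ f.map_comp_comul }

namespace Bialgebra

variable {R C D B : Type*} [CommSemiring R]
  [AddCommMonoid C] [Module R C] [Coalgebra R C] [AddCommMonoid D] [Module R D] [Coalgebra R D]
  [Semiring B] [Bialgebra R B]

def mulMapCoalgHom (f : C →ₗc[R] B) (g : D →ₗc[R] B) : C ⊗[R] D →ₗc[R] B :=
  (mulCoalgHom R B).comp (Coalgebra.TensorProduct.map f g)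

theorem toLinearMap_mulMapCoalgHom (f : C →ₗc[R] B) (g : D →ₗc[R] B) :
    (mulMapCoalgHom f g : C ⊗[R] D →ₗ[R] B) = LinearMap.mul' R B ∘ₗ map (f : C →ₗ[R] B) g :=
  rfl

end Bialgebra

open Bialgebra

section Factorisation

variable (jA : A →ₐc[k] X) (jH : H →ₐc[k] X) {ξ : (A ⊗[k] H) ≃ₗ[k] X}

theorem mD_tmul_tmul (a a' : A) (h h' : H) :
    mD jA jH ξ ((a ⊗ₜ h) ⊗ₜ (a' ⊗ₜ h')) = (a ⊗ₜ 1) * zetaAB jA jH ξ (h ⊗ₜ a') * (1 ⊗ₜ h') := by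
  simp only [mD, LinearMap.coe_comp, Function.comp_apply, LinearEquiv.coe_coe, assoc_tmul,
    map_tmul, LinearMap.id_coe, id_eq, assoc_symm_tmul]
  induction zetaAB jA jH ξ (h ⊗ₜ a') with
  | zero => simp
  | add w₁ w₂ h₁ h₂ => simp only [add_tmul, tmul_add, map_add, mul_add, add_mul, h₁, h₂]
  | tmul a'' h'' => simp

theorem zetaAB_eq_map_comp_comul : zetaAB jA jH ξ =
    map (counitRight k A H ∘ₗ zetaF jA jH ξ) (counitLeft k A H ∘ₗ zetaF jA jH ξ) ∘ₗ
      Coalgebra.comul :=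
  rfl

theorem xi_zetaF_tmul (h : H) (a : A) : ξ (zetaF jA jH ξ (h ⊗ₜ a)) = jH h * jA a := by
  simp [zetaF]

variable (hξ : ∀ (a : A) (h : H), ξ (a ⊗ₜ[k] h) = jA a * jH h)
include hξ

theorem toLinearMap_eq_mulMapCoalgHom :
    ξ.toLinearMap = mulMapCoalgHom (jA : A →ₗc[k] X) (jH : H →ₗc[k] X) :=
  TensorProduct.ext' fun a h => by simp [toLinearMap_mulMapCoalgHom, hξ]

def coalgEquivOfFactorisation : A ⊗[k] H ≃ₗc[k] X :=
  CoalgEquiv.ofLinearEquiv ξ _ (toLinearMap_eq_mulMapCoalgHom jA jH hξ)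

theorem zetaF_eq_symm_comp_mulMapCoalgHom :
    zetaF jA jH ξ = ((coalgEquivOfFactorisation jA jH hξ).symm.toCoalgHom.comp
      (mulMapCoalgHom (jH : H →ₗc[k] X) (jA : A →ₗc[k] X)) : H ⊗[k] A →ₗ[k] A ⊗[k] H) :=
  rfl

theorem zetaAB_eq_zetaF : zetaAB jA jH ξ = zetaF jA jH ξ := by
  rw [zetaAB_eq_map_comp_comul, zetaF_eq_symm_comp_mulMapCoalgHom jA jH hξ]
  exact CoalgHom.map_counitRight_comp_counitLeft_comp_comul _

theorem xi_tmul_one_mul_mul_one_tmul (a : A) (h : H) (w : A ⊗[k] H) :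
    ξ ((a ⊗ₜ 1) * w * (1 ⊗ₜ h)) = jA a * ξ w * jH h := by
  induction w with
  | zero => simp
  | add w₁ w₂ h₁ h₂ => simp only [mul_add, add_mul, map_add, h₁, h₂]
  | tmul a' h' => simp [hξ, mul_assoc]

end Factorisation

/-- Factorisation theorem, multiplicative part: ξ transports
m_D to the multiplication of X: ξ(m_D(u ⊗ v)) = ξ(u)·ξ(v) and ξ(1 ⊗ 1) = 1.
Hence ξ is an algebra isomorphism from the double cross product A ⋈ H onto X. -/
theorem factorisation_mult (jA : A →ₐc[k] X) (jH : H →ₐc[k] X)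
    (ξ : (A ⊗[k] H) ≃ₗ[k] X)
    (hξ : ∀ (a : A) (h : H), ξ (a ⊗ₜ[k] h) = jA a * jH h) :
    (∀ u v : A ⊗[k] H, ξ (mD jA jH ξ (u ⊗ₜ[k] v)) = ξ u * ξ v) ∧
    ξ ((1 : A) ⊗ₜ[k] (1 : H)) = (1 : X) := by
  have hmul : ξ.toLinearMap ∘ₗ mD jA jH ξ =
      LinearMap.mul' k X ∘ₗ map ξ.toLinearMap ξ.toLinearMap :=
    ext_fourfold' fun a h a' h' => by
      simp only [LinearMap.comp_apply, LinearEquiv.coe_coe, map_tmul, LinearMap.mul'_apply]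
      rw [mD_tmul_tmul, zetaAB_eq_zetaF jA jH hξ, xi_tmul_one_mul_mul_one_tmul jA jH hξ,
        xi_zetaF_tmul, hξ, hξ]
      simp only [mul_assoc]
  exact ⟨fun u v => LinearMap.congr_fun hmul (u ⊗ₜ v), by rw [hξ, map_one, map_one, one_mul]⟩
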